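/- arXiv:1307.3719 — 6 statements merged into one kernel-verified Lean document; each statement's English description precedes it below -/
import Mathlib

section
/- Let P₀ and P₁ be π-reversible Markov kernels on (X, 𝒳). If P₁ dominates P₀ on the off-diagonal (i.e., for all A ∈ 𝒳 and π-a.s. all x, P₁(x, A \ {x}) ≥ P₀(x, A \ {x})), then P₁ dominates P₀ in the covariance ordering: for all f ∈ L²(π), ⟨f, P₁f⟩ ≤ ⟨f, P₀f⟩. -/
/-!
Writing `E(f) = ½ ∫∫ (f x - f y)² P(x, dy) π(dx)` for the Dirichlet form, reversibility makes both
marginals of `π ⊗ P` equal to `π`, so expanding the square gives `⟨f, P f⟩ = ‖f‖² - E(f)`.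
It thus suffices to show `E₀(f) ≤ E₁(f)`. The diagonal `y = x` does not contribute to
`∫ (f x - f y)² P(x, dy)`, and by the layer-cake formula this integral only sees the masses of the
sets `{y | t < (f x - f y)²}`, unions of two rays pulled back by `f`. Continuity from below reduces
these to countably many rational rays, on which the off-diagonal domination holds for `π`-a.e. `x`.
-/

open MeasureTheory ProbabilityTheory Set

section Rays

variable {Y : Type*} [MeasurableSpace Y] {μ ν : Measure Y} {g : Y → ℝ}

lemma measure_preimage_Iio_le_of_forall_rat
    (h : ∀ q : ℚ, μ (g ⁻¹' Iio (q : ℝ)) ≤ ν (g ⁻¹' Iio (q : ℝ))) (a : ℝ) :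
    μ (g ⁻¹' Iio a) ≤ ν (g ⁻¹' Iio a) := by
  have hunion : g ⁻¹' Iio a = ⋃ q : {q : ℚ // (q : ℝ) < a}, g ⁻¹' Iio (q : ℝ) := by
    ext y
    simp only [mem_preimage, mem_Iio, mem_iUnion, Subtype.exists, exists_prop]
    exact ⟨fun hy ↦ (exists_rat_btwn hy).imp fun q hq ↦ ⟨hq.2, hq.1⟩,
      fun ⟨q, hqa, hyq⟩ ↦ hyq.trans hqa⟩
  have hdir : Directed (· ⊆ ·) fun q : {q : ℚ // (q : ℝ) < a} ↦ g ⁻¹' Iio (q : ℝ) :=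
    fun q r ↦ ⟨⟨max q r, by push_cast; exact max_lt q.2 r.2⟩,
      preimage_mono (Iio_subset_Iio (by simp)), preimage_mono (Iio_subset_Iio (by simp))⟩
  rw [hunion, hdir.measure_iUnion, hdir.measure_iUnion]
  exact iSup_mono fun q ↦ h q

lemma measure_preimage_Ioi_le_of_forall_rat
    (h : ∀ q : ℚ, μ (g ⁻¹' Ioi (q : ℝ)) ≤ ν (g ⁻¹' Ioi (q : ℝ))) (a : ℝ) :
    μ (g ⁻¹' Ioi a) ≤ ν (g ⁻¹' Ioi a) := by
  have hneg (b : ℝ) : g ⁻¹' Ioi b = (-g) ⁻¹' Iio (-b) := by ext; simp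
  rw [hneg]
  exact measure_preimage_Iio_le_of_forall_rat (fun q ↦ by simpa [hneg] using h (-q)) (-a)

lemma lintegral_sq_sub_le_of_forall_rat (hg : Measurable g)
    (hIio : ∀ q : ℚ, μ (g ⁻¹' Iio (q : ℝ)) ≤ ν (g ⁻¹' Iio (q : ℝ)))
    (hIoi : ∀ q : ℚ, μ (g ⁻¹' Ioi (q : ℝ)) ≤ ν (g ⁻¹' Ioi (q : ℝ))) (c : ℝ) :
    ∫⁻ y, ENNReal.ofReal ((c - g y) ^ 2) ∂μ ≤ ∫⁻ y, ENNReal.ofReal ((c - g y) ^ 2) ∂ν := by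
  have hm : Measurable (fun y ↦ (c - g y) ^ 2) := (measurable_const.sub hg).pow_const 2
  rw [lintegral_eq_lintegral_meas_lt μ (ae_of_all _ fun _ ↦ sq_nonneg _) hm.aemeasurable,
    lintegral_eq_lintegral_meas_lt ν (ae_of_all _ fun _ ↦ sq_nonneg _) hm.aemeasurable]
  refine setLIntegral_mono' measurableSet_Ioi fun t (ht : 0 < t) ↦ ?_
  have hsqrt : 0 < √t := Real.sqrt_pos.2 ht
  have hsplit : {y | t < (c - g y) ^ 2} = g ⁻¹' Iio (c - √t) ∪ g ⁻¹' Ioi (c + √t) := by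
    ext y
    rw [mem_ofPred_eq, ← Real.sqrt_lt_sqrt_iff ht.le, Real.sqrt_sq_eq_abs, lt_abs]
    simp only [mem_union, mem_preimage, mem_Iio, mem_Ioi]
    constructor <;> rintro (h | h) <;> [left; right; left; right] <;> linarith
  have hdisj : Disjoint (g ⁻¹' Iio (c - √t)) (g ⁻¹' Ioi (c + √t)) :=
    ((Iic_disjoint_Ioi (by linarith)).mono_left Iio_subset_Iic_self).preimage g
  rw [hsplit, measure_union hdisj (hg measurableSet_Ioi),
    measure_union hdisj (hg measurableSet_Ioi)]
  exact add_le_add (measure_preimage_Iio_le_of_forall_rat hIio _)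
    (measure_preimage_Ioi_le_of_forall_rat hIoi _)

lemma lintegral_sq_sub_eq_restrict_compl (μ : Measure Y) (g : Y → ℝ) (x : Y) :
    ∫⁻ y, ENNReal.ofReal ((g x - g y) ^ 2) ∂μ
      = ∫⁻ y in {x}ᶜ, ENNReal.ofReal ((g x - g y) ^ 2) ∂μ := by
  refine (setLIntegral_eq_of_support_subset fun y hy ↦ ?_).symm
  rintro rfl
  simp at hy

end Rays

lemma MeasureTheory.MeasurePreserving.integral_comp_of_aestronglyMeasurable {α β E : Type*}
    [MeasurableSpace α] [MeasurableSpace β] [NormedAddCommGroup E] [NormedSpace ℝ E]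
    {μ : Measure α} {ν : Measure β} {φ : α → β} (hφ : MeasurePreserving φ μ ν) {g : β → E}
    (hg : AEStronglyMeasurable g ν) :
    ∫ x, g (φ x) ∂μ = ∫ y, g y ∂ν := by
  rw [← hφ.map_eq] at hg ⊢
  exact (integral_map hφ.aemeasurable hg).symm

section Kernel

variable {X : Type*} [MeasurableSpace X] {π : Measure X} [SFinite π] {P P₀ P₁ : Kernel X X}

noncomputable def dirichletForm (π : Measure X) (P : Kernel X X) (f : X → ℝ) : ℝ :=
  (∫ p, (f p.1 - f p.2) ^ 2 ∂(π ⊗ₘ P)) / 2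

lemma measurePreserving_fst_compProd [IsMarkovKernel P] :
    MeasurePreserving Prod.fst (π ⊗ₘ P) π :=
  ⟨measurable_fst, Measure.fst_compProd π P⟩

lemma measurePreserving_snd_compProd_of_map_swap [IsMarkovKernel P]
    (hrev : (π ⊗ₘ P).map Prod.swap = π ⊗ₘ P) :
    MeasurePreserving Prod.snd (π ⊗ₘ P) π := by
  refine ⟨measurable_snd, ?_⟩
  rw [← hrev, Measure.map_map measurable_snd measurable_swap]
  exact Measure.fst_compProd π P

lemma dirichletForm_congr_ae [IsMarkovKernel P] (hrev : (π ⊗ₘ P).map Prod.swap = π ⊗ₘ P)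
    {f g : X → ℝ} (hfg : f =ᵐ[π] g) :
    dirichletForm π P f = dirichletForm π P g := by
  have h₁ := (measurePreserving_fst_compProd (P := P)).quasiMeasurePreserving.ae_eq_comp hfg
  have h₂ := (measurePreserving_snd_compProd_of_map_swap hrev).quasiMeasurePreserving.ae_eq_comp hfg
  unfold dirichletForm
  congr 1
  refine integral_congr_ae ?_
  filter_upwards [h₁, h₂] with p hp₁ hp₂
  simp only [Function.comp_apply] at hp₁ hp₂
  rw [hp₁, hp₂]

lemma integral_mul_integral_eq_sub_dirichletForm [IsMarkovKernel P]
    (hrev : (π ⊗ₘ P).map Prod.swap = π ⊗ₘ P) {f : X → ℝ} (hf : MemLp f 2 π) :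
    ∫ x, f x * ∫ y, f y ∂(P x) ∂π = ∫ x, f x ^ 2 ∂π - dirichletForm π P f := by
  have hfst := measurePreserving_fst_compProd (π := π) (P := P)
  have hsnd := measurePreserving_snd_compProd_of_map_swap hrev
  have hf₁ : MemLp (fun p : X × X ↦ f p.1) 2 (π ⊗ₘ P) := hf.comp_measurePreserving hfst
  have hf₂ : MemLp (fun p : X × X ↦ f p.2) 2 (π ⊗ₘ P) := hf.comp_measurePreserving hsnd
  have hsq : Integrable (fun p : X × X ↦ f p.1 ^ 2 + f p.2 ^ 2) (π ⊗ₘ P) :=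
    hf₁.integrable_sq.add hf₂.integrable_sq
  have hmul : Integrable (fun p : X × X ↦ f p.1 * f p.2) (π ⊗ₘ P) := hf₁.integrable_mul hf₂
  have hexpand : ∫ p, (f p.1 - f p.2) ^ 2 ∂(π ⊗ₘ P)
      = ∫ p, f p.1 ^ 2 ∂(π ⊗ₘ P) + ∫ p, f p.2 ^ 2 ∂(π ⊗ₘ P)
        - 2 * ∫ p, f p.1 * f p.2 ∂(π ⊗ₘ P) := by
    simp_rw [sub_sq', mul_assoc]
    rw [integral_sub hsq (hmul.const_mul 2),
      integral_add hf₁.integrable_sq hf₂.integrable_sq, integral_const_mul]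
  have hcross : ∫ p, f p.1 * f p.2 ∂(π ⊗ₘ P) = ∫ x, f x * ∫ y, f y ∂(P x) ∂π := by
    rw [Measure.integral_compProd hmul]
    exact integral_congr_ae (ae_of_all _ fun x ↦ integral_const_mul (f x) f)
  have hf_sq := hf.integrable_sq.aestronglyMeasurable
  unfold dirichletForm
  rw [hexpand, hcross, hfst.integral_comp_of_aestronglyMeasurable hf_sq,
    hsnd.integral_comp_of_aestronglyMeasurable hf_sq]
  ring

lemma integrable_sq_sub_compProd [IsMarkovKernel P] (hrev : (π ⊗ₘ P).map Prod.swap = π ⊗ₘ P)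
    {f : X → ℝ} (hf : MemLp f 2 π) :
    Integrable (fun p : X × X ↦ (f p.1 - f p.2) ^ 2) (π ⊗ₘ P) :=
  ((hf.comp_measurePreserving measurePreserving_fst_compProd).sub
    (hf.comp_measurePreserving (measurePreserving_snd_compProd_of_map_swap hrev))).integrable_sq

lemma lintegral_compProd_sq_sub_le [IsSFiniteKernel P₀] [IsSFiniteKernel P₁]
    (hoff : ∀ A : Set X, MeasurableSet A → ∀ᵐ x ∂π, P₀ x (A \ {x}) ≤ P₁ x (A \ {x}))
    {g : X → ℝ} (hg : Measurable g) :
    ∫⁻ p, ENNReal.ofReal ((g p.1 - g p.2) ^ 2) ∂(π ⊗ₘ P₀)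
      ≤ ∫⁻ p, ENNReal.ofReal ((g p.1 - g p.2) ^ 2) ∂(π ⊗ₘ P₁) := by
  have hm : Measurable fun p : X × X ↦ ENNReal.ofReal ((g p.1 - g p.2) ^ 2) :=
    (((hg.comp measurable_fst).sub (hg.comp measurable_snd)).pow_const 2).ennreal_ofReal
  rw [Measure.lintegral_compProd hm, Measure.lintegral_compProd hm]
  have hIio := ae_all_iff.2 fun q : ℚ ↦ hoff (g ⁻¹' Iio (q : ℝ)) (hg measurableSet_Iio)
  have hIoi := ae_all_iff.2 fun q : ℚ ↦ hoff (g ⁻¹' Ioi (q : ℝ)) (hg measurableSet_Ioi)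
  refine lintegral_mono_ae ?_
  filter_upwards [hIio, hIoi] with x hxIio hxIoi
  rw [lintegral_sq_sub_eq_restrict_compl (P₀ x) g x, lintegral_sq_sub_eq_restrict_compl (P₁ x) g x]
  refine lintegral_sq_sub_le_of_forall_rat hg (fun q ↦ ?_) (fun q ↦ ?_) (g x)
  · simpa only [Measure.restrict_apply (hg measurableSet_Iio), ← sdiff_eq] using hxIio q
  · simpa only [Measure.restrict_apply (hg measurableSet_Ioi), ← sdiff_eq] using hxIoi q

lemma dirichletForm_le_of_offDiag_le [IsSFiniteKernel P₀] [IsSFiniteKernel P₁]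
    (hoff : ∀ A : Set X, MeasurableSet A → ∀ᵐ x ∂π, P₀ x (A \ {x}) ≤ P₁ x (A \ {x}))
    {g : X → ℝ} (hg : Measurable g)
    (hint : Integrable (fun p : X × X ↦ (g p.1 - g p.2) ^ 2) (π ⊗ₘ P₁)) :
    dirichletForm π P₀ g ≤ dirichletForm π P₁ g := by
  have hae (P : Kernel X X) := ae_of_all (π ⊗ₘ P) fun p : X × X ↦ sq_nonneg (g p.1 - g p.2)
  have hsm : AEStronglyMeasurable (fun p : X × X ↦ (g p.1 - g p.2) ^ 2) (π ⊗ₘ P₀) :=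
    (((hg.comp measurable_fst).sub (hg.comp measurable_snd)).pow_const 2).aestronglyMeasurable
  unfold dirichletForm
  rw [integral_eq_lintegral_of_nonneg_ae (hae P₀) hsm,
    integral_eq_lintegral_of_nonneg_ae (hae P₁) hint.aestronglyMeasurable]
  gcongr ?_ / 2
  exact ENNReal.toReal_mono hint.lintegral_lt_top.ne (lintegral_compProd_sq_sub_le hoff hg)

end Kernel

theorem stmt3_general {X : Type*} [MeasurableSpace X]
    (π : Measure X) [IsProbabilityMeasure π]
    (P0 P1 : Kernel X X) [IsMarkovKernel P0] [IsMarkovKernel P1]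
    (hrev0 : (π.compProd P0).map Prod.swap = π.compProd P0)
    (hrev1 : (π.compProd P1).map Prod.swap = π.compProd P1)
    (hpeskun : ∀ A : Set X, MeasurableSet A →
      ∀ᵐ x ∂π, P0 x (A \ {x}) ≤ P1 x (A \ {x}))
    (f : X → ℝ) (hf : MemLp f 2 π) :
    ∫ x, f x * (∫ y, f y ∂(P1 x)) ∂π ≤ ∫ x, f x * (∫ y, f y ∂(P0 x)) ∂π := by
  obtain ⟨g, hg, hfg⟩ := hf.aestronglyMeasurable.aemeasurable
  rw [integral_mul_integral_eq_sub_dirichletForm hrev0 hf,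
    integral_mul_integral_eq_sub_dirichletForm hrev1 hf,
    dirichletForm_congr_ae hrev0 hfg, dirichletForm_congr_ae hrev1 hfg]
  exact sub_le_sub_left (dirichletForm_le_of_offDiag_le hpeskun hg
    (integrable_sq_sub_compProd hrev1 (hf.ae_eq hfg))) _

/-- Off-diagonal (Peskun) domination implies covariance-ordering domination:
if `P₁(x, A \ {x}) ≥ P₀(x, A \ {x})` for all measurable `A` and `π`-a.e. `x`, then
`⟨f, P₁ f⟩ ≤ ⟨f, P₀ f⟩` for every `f ∈ L²(π)`. -/
theorem stmt3 {X : Type*} [MeasurableSpace X] [MeasurableSingletonClass X]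
    (π : Measure X) [IsProbabilityMeasure π]
    (P0 P1 : Kernel X X) [IsMarkovKernel P0] [IsMarkovKernel P1]
    (hrev0 : (π.compProd P0).map Prod.swap = π.compProd P0)
    (hrev1 : (π.compProd P1).map Prod.swap = π.compProd P1)
    (hpeskun : ∀ A : Set X, MeasurableSet A →
      ∀ᵐ x ∂π, P0 x (A \ {x}) ≤ P1 x (A \ {x}))
    (f : X → ℝ) (hf : MemLp f 2 π) :
    ∫ x, f x * (∫ y, f y ∂(P1 x)) ∂π ≤ ∫ x, f x * (∫ y, f y ∂(P0 x)) ∂π :=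
  stmt3_general π P0 P1 hrev0 hrev1 hpeskun f hf
end

section
/- Let P and Q be Markov kernels on (X, 𝒳) with πP = πQ = π, and let (Xₖ)ₖ≥₀ be the inhomogeneous Markov chain with X₀ ∼ π that evolves alternatingly: transitions at even times use P and at odd times use Q. For f ∈ L²(π), if Σₖ≥₁ (|Cov(f(X₀), f(Xₖ))| + |Cov(f(X₁), f(Xₖ₊₁))|) < ∞, then the limit limₙ (1/n) Var(Σₖ₌₀ⁿ⁻¹ f(Xₖ)) exists and equals π f² − (π f)² + Σₖ≥₁ Cov(f(X₀), f(Xₖ)) + Σₖ≥₁ Cov(f(X₁), f(Xₖ₊₁)). -/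
/-!
Because the chain alternates between two kernels, `Cov(f(X_i), f(X_{i+m}))` depends on `i` only
through its parity. Hence `Var(∑_{k<n} f(X_k))` is, lag by lag, a combination of `Cov(f(X₀), f(X_m))`
and `Cov(f(X₁), f(X_{m+1}))` with weights counting the even and the odd starting times, roughly
`(n - m) / 2` each. After division by `n` these weights tend to `1/2` and stay bounded, so the
absolute summability of the covariances lets Tannery's theorem (dominated convergence for series)
pass to the limit.
-/

open MeasureTheory ProbabilityTheory Filter
open scoped Topology

/-- `opSeq P Q i m f x = E[f(X_{i+m}) ∣ X_i = x]` for the inhomogeneous chain that uses the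
kernel `P` for transitions out of even times and `Q` out of odd times. -/
noncomputable def opSeq {X : Type*} [MeasurableSpace X] (P Q : Kernel X X) :
    ℕ → ℕ → (X → ℝ) → X → ℝ
  | _, 0, f => f
  | i, m + 1, f => fun x => ∫ y, opSeq P Q (i + 1) m f y ∂((if Even i then P else Q) x)

/-- `covA π P Q f i m = Cov(f(X_i), f(X_{i+m}))` for the alternating chain started in
stationarity `X₀ ∼ π` (so that every `X_k ∼ π`). -/
noncomputable def covA {X : Type*} [MeasurableSpace X] (π : Measure X) (P Q : Kernel X X)
    (f : X → ℝ) (i m : ℕ) : ℝ :=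
  (∫ x, f x * opSeq P Q i m f x ∂π) - (∫ x, f x ∂π) ^ 2

/-- `varA π P Q f n = Var(∑_{k=0}^{n-1} f(X_k)) = ∑_{i,j<n} Cov(f(X_i), f(X_j))` for the
alternating chain started in stationarity. -/
noncomputable def varA {X : Type*} [MeasurableSpace X] (π : Measure X) (P Q : Kernel X X)
    (f : X → ℝ) (n : ℕ) : ℝ :=
  ∑ i ∈ Finset.range n, ∑ j ∈ Finset.range n,
    covA π P Q f (min i j) (max i j - min i j)

open Finset

theorem Function.Periodic.sum_range_two {M : Type*} [AddCommMonoid M] {g : ℕ → M}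
    (hg : Function.Periodic g 2) :
    ∀ N, ∑ i ∈ range N, g i = ((N + 1) / 2) • g 0 + (N / 2) • g 1
  | 0 => by simp
  | 1 => by simp
  | N + 2 => by
    simp_rw [add_comm N, sum_range_add, add_comm 2, hg _, Function.Periodic.sum_range_two hg N,
      sum_range_succ, range_zero, sum_empty, zero_add]
    rw [show (N + 2 + 1) / 2 = (N + 1) / 2 + 1 by omega, show (N + 2) / 2 = N / 2 + 1 by omega,
      add_nsmul, add_nsmul, one_nsmul, one_nsmul]
    abel

section DoubleSum

variable {M : Type*} [AddCommMonoid M] (c : ℕ → ℕ → M)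

lemma sum_range_sum_range_min_max_succ (n : ℕ) :
    ∑ i ∈ range (n + 1), ∑ j ∈ range (n + 1), c (min i j) (max i j - min i j)
      = ∑ i ∈ range n, ∑ j ∈ range n, c (min i j) (max i j - min i j)
        + c n 0 + 2 • ∑ i ∈ range n, c i (n - i) := by
  have hrow : ∀ i ∈ range n, ∑ j ∈ range (n + 1), c (min i j) (max i j - min i j)
      = ∑ j ∈ range n, c (min i j) (max i j - min i j) + c i (n - i) := by
    intro i hi
    rw [sum_range_succ, min_eq_left (mem_range.mp hi).le, max_eq_right (mem_range.mp hi).le]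
  have hlast : ∑ j ∈ range (n + 1), c (min n j) (max n j - min n j)
      = ∑ j ∈ range n, c j (n - j) + c n 0 := by
    rw [sum_range_succ, min_self, max_self, Nat.sub_self]
    congr 1
    refine sum_congr rfl fun j hj => ?_
    rw [min_eq_right (mem_range.mp hj).le, max_eq_left (mem_range.mp hj).le]
  rw [sum_range_succ, sum_congr rfl hrow, sum_add_distrib, hlast, two_nsmul]
  abel

lemma sum_range_sum_range_min_max_eq_sum_sub (n : ℕ) :
    ∑ i ∈ range n, ∑ j ∈ range n, c (min i j) (max i j - min i j)
      = ∑ i ∈ range n, c i 0 + 2 • ∑ k ∈ range n, ∑ i ∈ range k, c i (k - i) := by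
  induction n with
  | zero => simp
  | succ n ih =>
    rw [sum_range_sum_range_min_max_succ, ih, sum_range_succ,
      sum_range_succ (fun k => ∑ i ∈ range k, c i (k - i)), nsmul_add]
    abel

lemma sum_range_sum_range_sub_eq_sum_lag (n : ℕ) :
    ∑ k ∈ range n, ∑ i ∈ range k, c i (k - i)
      = ∑ k ∈ range n, ∑ i ∈ range (n - (k + 1)), c i (k + 1) := by
  rw [sum_sigma', sum_sigma']
  refine sum_nbij' (fun p => ⟨p.1 - p.2 - 1, p.2⟩) (fun p => ⟨p.1 + 1 + p.2, p.2⟩)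
    ?_ ?_ ?_ ?_ ?_ <;> rintro ⟨k, i⟩ hki <;> simp only [mem_sigma, mem_range] at hki ⊢
  · omega
  · omega
  all_goals congr 1; omega

end DoubleSum

lemma tendsto_natCast_sub_add_div_two_div (a b : ℕ) :
    Tendsto (fun n : ℕ => (((n - b + a) / 2 : ℕ) : ℝ) / n) atTop (𝓝 (1 / 2)) := by
  rw [← tendsto_sub_nhds_zero_iff]
  refine squeeze_zero_norm' ?_ (tendsto_const_div_atTop_nhds_zero_nat ((a + b + 1 : ℕ) : ℝ))
  filter_upwards [eventually_gt_atTop 0] with n hn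
  have hlo : n ≤ 2 * ((n - b + a) / 2) + (a + b + 1) := by omega
  have hhi : 2 * ((n - b + a) / 2) ≤ n + (a + b + 1) := by omega
  set x := (n - b + a) / 2
  set m := a + b + 1
  have hn' : (0 : ℝ) < n := by exact_mod_cast hn
  have hlo' : (n : ℝ) ≤ 2 * x + m := by exact_mod_cast hlo
  have hhi' : 2 * (x : ℝ) ≤ n + m := by exact_mod_cast hhi
  have hdev : |2 * (x : ℝ) - n| ≤ m := abs_le.mpr ⟨by linarith, by linarith⟩
  rw [Real.norm_eq_abs, show (x : ℝ) / n - 1 / 2 = (2 * x - n) / (2 * n) by field_simp, abs_div,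
    abs_of_pos (by positivity : (0 : ℝ) < 2 * n), div_le_div_iff₀ (by positivity) hn']
  nlinarith

lemma tendsto_tsum_weighted_parity {a b : ℕ → ℝ} (hsum : Summable fun k => |a k| + |b k|) :
    Tendsto (fun n : ℕ => ∑' k, 2 * ((((n - (k + 1) + 1) / 2 : ℕ) : ℝ) / n * a k
      + (((n - (k + 1)) / 2 : ℕ) : ℝ) / n * b k)) atTop (𝓝 (∑' k, a k + ∑' k, b k)) := by
  have ha : Summable a :=
    (hsum.of_nonneg_of_le (fun _ => abs_nonneg _) fun k => le_add_of_nonneg_right (abs_nonneg _)).of_abs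
  have hb : Summable b :=
    (hsum.of_nonneg_of_le (fun _ => abs_nonneg _) fun k => le_add_of_nonneg_left (abs_nonneg _)).of_abs
  rw [← ha.tsum_add hb]
  refine tendsto_tsum_of_dominated_convergence (hsum.mul_left 2) (fun k => ?_)
    (Eventually.of_forall fun n k => ?_)
  · have h1 := tendsto_natCast_sub_add_div_two_div 1 (k + 1)
    have h0 : Tendsto (fun n : ℕ => (((n - (k + 1)) / 2 : ℕ) : ℝ) / n) atTop (𝓝 (1 / 2)) := by
      simpa using tendsto_natCast_sub_add_div_two_div 0 (k + 1)
    convert ((h1.mul_const (a k)).add (h0.mul_const (b k))).const_mul 2 using 2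
    ring
  · have hweight : ∀ N ≤ n, 0 ≤ (N : ℝ) / n ∧ (N : ℝ) / n ≤ 1 := fun N hN =>
      ⟨by positivity, div_le_one_of_le₀ (by exact_mod_cast hN) (by positivity)⟩
    obtain ⟨hu₀, hu₁⟩ := hweight ((n - (k + 1) + 1) / 2) (by omega)
    obtain ⟨hv₀, hv₁⟩ := hweight ((n - (k + 1)) / 2) (by omega)
    rw [Real.norm_eq_abs, abs_mul, abs_two]
    gcongr
    refine (abs_add_le _ _).trans (add_le_add ?_ ?_) <;> rw [abs_mul, abs_of_nonneg ‹_›]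
    exacts [mul_le_of_le_one_left (abs_nonneg _) hu₁, mul_le_of_le_one_left (abs_nonneg _) hv₁]

theorem tendsto_sum_range_sum_range_min_max_div {c : ℕ → ℕ → ℝ}
    (hc : ∀ m, Function.Periodic (c · m) 2)
    (hsum : Summable fun k => |c 0 (k + 1)| + |c 1 (k + 1)|) :
    Tendsto (fun n : ℕ => (∑ i ∈ range n, ∑ j ∈ range n, c (min i j) (max i j - min i j)) / n)
      atTop (𝓝 ((c 0 0 + c 1 0) / 2 + ∑' k, c 0 (k + 1) + ∑' k, c 1 (k + 1))) := by
  have hsplit : ∀ n : ℕ,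
      (((n + 1) / 2 : ℕ) : ℝ) / n * c 0 0 + ((n / 2 : ℕ) : ℝ) / n * c 1 0
        + ∑' k, 2 * ((((n - (k + 1) + 1) / 2 : ℕ) : ℝ) / n * c 0 (k + 1)
          + (((n - (k + 1)) / 2 : ℕ) : ℝ) / n * c 1 (k + 1))
      = (∑ i ∈ range n, ∑ j ∈ range n, c (min i j) (max i j - min i j)) / n := by
    intro n
    rw [tsum_eq_sum (s := range n) fun k hk => by
      have hnk : n - (k + 1) = 0 := by rw [mem_range, not_lt] at hk; omega
      simp [hnk]]
    rw [sum_range_sum_range_min_max_eq_sum_sub, sum_range_sum_range_sub_eq_sum_lag,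
      (hc 0).sum_range_two]
    simp only [fun k => (hc (k + 1)).sum_range_two, nsmul_eq_mul, mul_sum, add_div, sum_div]
    congr 1
    · ring
    · exact sum_congr rfl fun k _ => by push_cast; ring
  have heven : Tendsto (fun n : ℕ => (((n + 1) / 2 : ℕ) : ℝ) / n) atTop (𝓝 (1 / 2)) := by
    simpa using tendsto_natCast_sub_add_div_two_div 1 0
  have hodd : Tendsto (fun n : ℕ => ((n / 2 : ℕ) : ℝ) / n) atTop (𝓝 (1 / 2)) := by
    simpa using tendsto_natCast_sub_add_div_two_div 0 0
  have hdiag := (heven.mul_const (c 0 0)).add (hodd.mul_const (c 1 0))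
  convert (hdiag.add (tendsto_tsum_weighted_parity hsum)).congr hsplit using 2
  ring

section AlternatingChain

variable {X : Type*} [MeasurableSpace X] (π : Measure X) (P Q : Kernel X X) (f : X → ℝ)

lemma opSeq_add_two (m : ℕ) : ∀ i, opSeq P Q (i + 2) m f = opSeq P Q i m f := by
  induction m with
  | zero => intro i; rfl
  | succ m ih =>
    intro i
    funext x
    simp only [opSeq, Nat.even_add, even_two, iff_true, ih (i + 1)]

lemma covA_periodic (m : ℕ) : Function.Periodic (fun i => covA π P Q f i m) 2 := fun i => by
  simp only [covA, opSeq_add_two]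

lemma covA_zero_right (i : ℕ) : covA π P Q f i 0 = (∫ x, f x ^ 2 ∂π) - (∫ x, f x ∂π) ^ 2 := by
  simp only [covA, opSeq, sq]

end AlternatingChain

theorem stmt4_general {X : Type*} [MeasurableSpace X] (π : Measure X)
    (P Q : Kernel X X)
    (f : X → ℝ)
    (hsum : Summable (fun k : ℕ => |covA π P Q f 0 (k + 1)| + |covA π P Q f 1 (k + 1)|)) :
    Tendsto (fun n : ℕ => varA π P Q f n / n) atTop
      (𝓝 ((∫ x, (f x) ^ 2 ∂π) - (∫ x, f x ∂π) ^ 2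
        + ∑' k : ℕ, covA π P Q f 0 (k + 1) + ∑' k : ℕ, covA π P Q f 1 (k + 1))) := by
  have h := tendsto_sum_range_sum_range_min_max_div (covA_periodic π P Q f) hsum
  rwa [covA_zero_right, covA_zero_right, add_self_div_two] at h

/-- Existence and value of the asymptotic variance for an inhomogeneous Markov chain
alternating between two `π`-invariant kernels, under absolute summability of the
autocovariances: `lim (1/n) Var(Σ_{k<n} f(X_k)) = πf² - (πf)² + Σ_{k≥1} Cov(f(X₀), f(X_k))
+ Σ_{k≥1} Cov(f(X₁), f(X_{k+1}))`. -/
theorem stmt4 {X : Type*} [MeasurableSpace X] (π : Measure X) [IsProbabilityMeasure π]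
    (P Q : Kernel X X) [IsMarkovKernel P] [IsMarkovKernel Q]
    (hinvP : π.bind (fun x => P x) = π) (hinvQ : π.bind (fun x => Q x) = π)
    (f : X → ℝ) (hf : MemLp f 2 π)
    (hsum : Summable (fun k : ℕ => |covA π P Q f 0 (k + 1)| + |covA π P Q f 1 (k + 1)|)) :
    Tendsto (fun n : ℕ => varA π P Q f n / n) atTop
      (𝓝 ((∫ x, (f x) ^ 2 ∂π) - (∫ x, f x ∂π) ^ 2
        + ∑' k : ℕ, covA π P Q f 0 (k + 1) + ∑' k : ℕ, covA π P Q f 1 (k + 1))) :=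
  stmt4_general π P Q f hsum
end

section
/- Let P, Q be Markov kernels on (X, 𝒳) with invariant measure π such that the product kernel PQ is V-geometrically ergodic. Let (Xₖ) be the chain with X₀ ∼ π evolving alternatingly under P and Q. Then for every measurable f with |f|_{V^{1/2}} < ∞ and |Pf|_{V^{1/2}} < ∞, the series Σₖ≥₁ (|Cov(f(X₀), f(Xₖ))| + |Cov(f(X₁), f(Xₖ₊₁))|) converges. -/
open MeasureTheory ProbabilityTheory
open scoped ENNReal

/-- `n`-step distributions `(PQ)ⁿ(x, ·)` of the product kernel `PQ`. -/
noncomputable def mIterPQ {X : Type*} [MeasurableSpace X] (P Q : Kernel X X) :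
    ℕ → X → Measure X
  | 0, x => Measure.dirac x
  | n + 1, x => (mIterPQ P Q n x).bind (fun z => (P z).bind (fun w => Q w))

/-!
`V`-geometric ergodicity of `PQ` only controls test functions bounded by `V`. A function with
`|h| ≤ c √V ≤ c (V / (2s) + s / 2)` splits into a `V`-bounded part and a bounded part, and the
total variation of a difference of probability measures is at most `2`; with
`s = √ρⁿ √V(x)` this turns the bound `C ρⁿ V(x)` into `c (C/2 + 1) √ρⁿ √V(x)` for `h`.

Started from `X₀ ∼ π`, `E[f(Xₘ) ∣ X₀]` is `(PQ)ⁿ f` or `(PQ)ⁿ (Pf)` for `m = 2n` or `2n + 1`,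
with `π (Pf) = π f`; by 2-periodicity `E[f(Xₘ₊₂) ∣ X₁]` is `Q` applied to the same function.
Each covariance is thus the integral of `f(y) (G(w) - π f)` against the law of `(X₀, X₀)` or
`(X₁, X₂)`, couplings of `π` with itself, and `√V(y) √V(w) ≤ (V(y) + V(w)) / 2` bounds it by a
constant times `√ρ^⌊m/2⌋ π V`, which is summable.
-/

lemma ProbabilityTheory.Kernel.mul_eq_comp {X : Type*} [MeasurableSpace X] (κ η : Kernel X X) :
    κ * η = κ ∘ₖ η := rfl

namespace AlternatingChain

variable {X : Type*}

lemma nonneg_of_abs_le_mul_sqrt [Nonempty X] {V h : X → ℝ} (hV1 : ∀ z, 1 ≤ V z) {c : ℝ}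
    (hh : ∀ z, |h z| ≤ c * √(V z)) : 0 ≤ c := by
  obtain ⟨z⟩ := ‹Nonempty X›
  have hsqrt : 0 < √(V z) := Real.sqrt_pos.mpr (by linarith [hV1 z])
  exact nonneg_of_mul_nonneg_left ((abs_nonneg _).trans (hh z)) hsqrt

variable [MeasurableSpace X]

section Operators

variable (P Q : Kernel X X)

lemma opSeq_add_two (f : X → ℝ) (i m : ℕ) : opSeq P Q (i + 2) m f = opSeq P Q i m f := by
  induction m generalizing i with
  | zero => rfl
  | succ m ih =>
    funext x
    simp only [opSeq, Nat.even_add, even_two, iff_true, show i + 2 + 1 = i + 1 + 2 by omega, ih]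

lemma opSeq_add_two_mul (f : X → ℝ) (i n m : ℕ) :
    opSeq P Q (i + 2 * n) m f = opSeq P Q i m f := by
  induction n with
  | zero => rfl
  | succ n ih => rw [show i + 2 * (n + 1) = i + 2 * n + 2 by ring, opSeq_add_two, ih]

lemma opSeq_add (f : X → ℝ) (i m n : ℕ) :
    opSeq P Q i (m + n) f = opSeq P Q i m (opSeq P Q (i + m) n f) := by
  induction m generalizing i with
  | zero => simp [opSeq]
  | succ m ih =>
    funext x
    simp only [show m + 1 + n = m + n + 1 by omega, opSeq, ih,
      show i + 1 + m = i + (m + 1) by omega]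

lemma opSeq_zero_one (f : X → ℝ) : opSeq P Q 0 1 f = fun x => ∫ y, f y ∂P x := by
  simp [opSeq]

lemma opSeq_zero_two (f : X → ℝ) :
    opSeq P Q 0 2 f = fun x => ∫ y, ∫ z, f z ∂Q y ∂P x := by
  simp [opSeq]

lemma opSeq_one_succ (f : X → ℝ) (m : ℕ) :
    opSeq P Q 1 (m + 1) f = fun y => ∫ z, opSeq P Q 0 m f z ∂Q y := by
  funext y
  simp only [opSeq, Nat.not_even_one, if_false]
  rw [← opSeq_add_two P Q f 0 m]

lemma measurable_opSeq {f : X → ℝ}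
    (hfm : Measurable f) (i m : ℕ) : Measurable (opSeq P Q i m f) := by
  induction m generalizing i with
  | zero => exact hfm
  | succ m ih =>
    have hint := (ih (i + 1)).stronglyMeasurable
    by_cases hi : Even i <;> simpa [opSeq, hi] using hint.integral_kernel.measurable

lemma mIterPQ_eq_pow (n : ℕ) (x : X) : mIterPQ P Q n x = ((Q ∘ₖ P) ^ n) x := by
  induction n generalizing x with
  | zero => rfl
  | succ n ih =>
    rw [pow_succ', Kernel.mul_eq_comp, Kernel.comp_apply, ← ih, mIterPQ]
    rfl

lemma integral_mIterPQ_succ {h : X → ℝ} {n : ℕ} {x : X}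
    (hh : Integrable h (mIterPQ P Q (n + 1) x)) :
    ∫ z, h z ∂(mIterPQ P Q (n + 1) x) = ∫ y, ∫ w, ∫ z, h z ∂(mIterPQ P Q n w) ∂Q y ∂P x := by
  simp only [mIterPQ_eq_pow] at hh ⊢
  rw [pow_succ, Kernel.mul_eq_comp] at hh ⊢
  rw [Kernel.integral_comp hh, Kernel.integral_comp hh.integral_comp]

lemma opSeq_zero_two_mul {h : X → ℝ} (hhm : Measurable h)
    (hh : ∀ n x, Integrable h (mIterPQ P Q n x)) (n : ℕ) :
    opSeq P Q 0 (2 * n) h = fun x => ∫ z, h z ∂(mIterPQ P Q n x) := by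
  induction n with
  | zero =>
    funext x
    simp [opSeq, mIterPQ, integral_dirac' h x hhm.stronglyMeasurable]
  | succ n ih =>
    funext x
    rw [show 2 * (n + 1) = 2 + 2 * n by ring, opSeq_add, opSeq_add_two, ih, opSeq_zero_two,
      integral_mIterPQ_succ P Q (hh (n + 1) x)]

lemma opSeq_zero_two_mul_add_one {h : X → ℝ} (hhm : Measurable h)
    (hh : ∀ n x, Integrable (fun z => ∫ y, h y ∂P z) (mIterPQ P Q n x)) (n : ℕ) :
    opSeq P Q 0 (2 * n + 1) h = fun x => ∫ z, (∫ y, h y ∂P z) ∂(mIterPQ P Q n x) := by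
  rw [opSeq_add, opSeq_add_two_mul, opSeq_zero_one]
  exact opSeq_zero_two_mul P Q hhm.stronglyMeasurable.integral_kernel.measurable hh n

end Operators

lemma integrable_of_abs_le_mul_sqrt {μ : Measure X} {V h : X → ℝ} (hV1 : ∀ z, 1 ≤ V z)
    (hμV : Integrable V μ) (hhm : Measurable h) {c : ℝ} (hh : ∀ z, |h z| ≤ c * √(V z)) :
    Integrable h μ := by
  refine (hμV.const_mul |c|).mono' hhm.aestronglyMeasurable (ae_of_all _ fun z => ?_)
  calc ‖h z‖ ≤ c * √(V z) := hh z
    _ ≤ |c| * √(V z) := by gcongr; exact le_abs_self c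
    _ ≤ |c| * V z := by gcongr; exact Real.sqrt_le_self_iff.mpr (Or.inr (hV1 z))

lemma integral_integral_eq_of_bind_eq {π : Measure X} {κ : Kernel X X}
    (hκ : π.bind (fun x => κ x) = π) {g : X → ℝ} (hg : Integrable g π) :
    ∫ x, ∫ y, g y ∂κ x ∂π = ∫ y, g y ∂π := by
  rw [← hκ] at hg
  conv_rhs => rw [← hκ]
  rw [Measure.comp_eq_comp_const_apply] at hg ⊢
  rw [Kernel.integral_comp hg]
  simp

section Coupling

variable {π : Measure X} [SFinite π] {κ : Kernel X X} [IsMarkovKernel κ] {V f : X → ℝ} {c D : ℝ}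

lemma integrable_comp_fst_compProd {g : X → ℝ} (hgm : Measurable g) (hg : Integrable g π) :
    Integrable (fun p => g p.1) (π ⊗ₘ κ) := by
  have : Integrable g (π ⊗ₘ κ).fst := by rwa [Measure.fst_compProd]
  exact (integrable_map_measure hgm.aestronglyMeasurable measurable_fst.aemeasurable).mp this

lemma integral_comp_fst_compProd {g : X → ℝ} (hgm : Measurable g) :
    ∫ p, g p.1 ∂(π ⊗ₘ κ) = ∫ x, g x ∂π := by
  conv_rhs => rw [← Measure.fst_compProd π κ]
  exact (integral_map measurable_fst.aemeasurable hgm.aestronglyMeasurable).symm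

lemma snd_compProd_of_bind_eq (hκ : π.bind (fun x => κ x) = π) : (π ⊗ₘ κ).snd = π := by
  rw [Measure.snd_compProd]; exact hκ

lemma integrable_comp_snd_compProd (hκ : π.bind (fun x => κ x) = π) {g : X → ℝ}
    (hgm : Measurable g) (hg : Integrable g π) :
    Integrable (fun p => g p.2) (π ⊗ₘ κ) := by
  have : Integrable g (π ⊗ₘ κ).snd := by rwa [snd_compProd_of_bind_eq hκ]
  exact (integrable_map_measure hgm.aestronglyMeasurable measurable_snd.aemeasurable).mp this

lemma integral_comp_snd_compProd (hκ : π.bind (fun x => κ x) = π) {g : X → ℝ}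
    (hgm : Measurable g) :
    ∫ p, g p.2 ∂(π ⊗ₘ κ) = ∫ x, g x ∂π := by
  conv_rhs => rw [← snd_compProd_of_bind_eq hκ]
  exact (integral_map measurable_snd.aemeasurable hgm.aestronglyMeasurable).symm

lemma abs_integral_mul_integral_sub_sq_le (hκ : π.bind (fun x => κ x) = π)
    (hV1 : ∀ z, 1 ≤ V z) (hVm : Measurable V) (hπV : Integrable V π) {G : X → ℝ} (hc : 0 ≤ c)
    (hD : 0 ≤ D)
    (hfm : Measurable f) (hGm : Measurable G) (hf : ∀ x, |f x| ≤ c * √(V x))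
    (hG : ∀ x, |G x - ∫ y, f y ∂π| ≤ D * √(V x)) :
    |∫ y, f y * ∫ z, G z ∂κ y ∂π - (∫ y, f y ∂π) ^ 2| ≤ c * D * ∫ x, V x ∂π := by
  set m := ∫ y, f y ∂π
  set F : X × X → ℝ := fun p => f p.1 * (G p.2 - m)
  have hF_le : ∀ p : X × X, |F p| ≤ c * D / 2 * (V p.1 + V p.2) := fun p => by
    have hamgm := two_mul_le_add_sq √(V p.1) √(V p.2)
    rw [Real.sq_sqrt (by linarith [hV1 p.1]), Real.sq_sqrt (by linarith [hV1 p.2])] at hamgm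
    calc |F p| = |f p.1| * |G p.2 - m| := abs_mul _ _
      _ ≤ (c * √(V p.1)) * (D * √(V p.2)) :=
        mul_le_mul (hf p.1) (hG p.2) (abs_nonneg _) ((abs_nonneg _).trans (hf p.1))
      _ ≤ c * D / 2 * (V p.1 + V p.2) := by nlinarith [mul_nonneg hc hD]
  have hbound_int : Integrable (fun p : X × X => c * D / 2 * (V p.1 + V p.2)) (π ⊗ₘ κ) :=
    ((integrable_comp_fst_compProd hVm hπV).add
      (integrable_comp_snd_compProd hκ hVm hπV)).const_mul _
  have hF_int : Integrable F (π ⊗ₘ κ) :=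
    hbound_int.mono' ((hfm.comp measurable_fst).mul
      ((hGm.comp measurable_snd).sub measurable_const)).aestronglyMeasurable
      (ae_of_all _ hF_le)
  have hf₁_int : Integrable (fun p : X × X => m * f p.1) (π ⊗ₘ κ) :=
    (integrable_comp_fst_compProd hfm (integrable_of_abs_le_mul_sqrt hV1 hπV hfm hf)).const_mul m
  have hcov : ∫ y, f y * ∫ z, G z ∂κ y ∂π - m ^ 2 = ∫ p, F p ∂(π ⊗ₘ κ) := by
    have hsplit : (fun p : X × X => f p.1 * G p.2) = fun p => F p + m * f p.1 := by
      funext p; ring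
    calc ∫ y, f y * ∫ z, G z ∂κ y ∂π - m ^ 2
        = ∫ y, ∫ z, f y * G z ∂κ y ∂π - m ^ 2 := by simp only [integral_const_mul]
      _ = ∫ p, f p.1 * G p.2 ∂(π ⊗ₘ κ) - m ^ 2 := by
        rw [Measure.integral_compProd (f := fun p : X × X => f p.1 * G p.2)
          (by rw [hsplit]; exact hF_int.add hf₁_int)]
      _ = ∫ p, F p ∂(π ⊗ₘ κ) := by
        rw [hsplit, integral_add hF_int hf₁_int, integral_const_mul,
          integral_comp_fst_compProd hfm]
        ring
  calc |∫ y, f y * ∫ z, G z ∂κ y ∂π - m ^ 2| = |∫ p, F p ∂(π ⊗ₘ κ)| := by rw [hcov]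
    _ ≤ ∫ p, c * D / 2 * (V p.1 + V p.2) ∂(π ⊗ₘ κ) := by
      rw [← Real.norm_eq_abs]
      exact norm_integral_le_of_norm_le hbound_int (ae_of_all _ hF_le)
    _ = c * D * ∫ x, V x ∂π := by
      rw [integral_const_mul, integral_add (integrable_comp_fst_compProd hVm hπV)
        (integrable_comp_snd_compProd hκ hVm hπV), integral_comp_fst_compProd hVm,
        integral_comp_snd_compProd hκ hVm]
      ring

lemma abs_covA_zero_le (P Q : Kernel X X)
    (hV1 : ∀ z, 1 ≤ V z) (hVm : Measurable V) (hπV : Integrable V π) (hc : 0 ≤ c) (hD : 0 ≤ D)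
    (hfm : Measurable f) (hf : ∀ x, |f x| ≤ c * √(V x)) {m : ℕ}
    (hdev : ∀ x, |opSeq P Q 0 m f x - ∫ y, f y ∂π| ≤ D * √(V x)) :
    |covA π P Q f 0 m| ≤ c * D * ∫ x, V x ∂π := by
  have hGm := measurable_opSeq P Q hfm 0 m
  have hid : π.bind (fun x => Kernel.id x) = π := by simp [Kernel.id_apply, Measure.bind_dirac]
  have := abs_integral_mul_integral_sub_sq_le hid hV1 hVm hπV hc hD hfm hGm hf hdev
  simpa [covA, Kernel.id_apply, integral_dirac' _ _ hGm.stronglyMeasurable] using this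

lemma abs_covA_one_succ_le (P Q : Kernel X X) [IsMarkovKernel Q]
    (hinvQ : π.bind (fun x => Q x) = π)
    (hV1 : ∀ z, 1 ≤ V z) (hVm : Measurable V) (hπV : Integrable V π) (hc : 0 ≤ c) (hD : 0 ≤ D)
    (hfm : Measurable f) (hf : ∀ x, |f x| ≤ c * √(V x)) {m : ℕ}
    (hdev : ∀ x, |opSeq P Q 0 m f x - ∫ y, f y ∂π| ≤ D * √(V x)) :
    |covA π P Q f 1 (m + 1)| ≤ c * D * ∫ x, V x ∂π := by
  rw [covA, opSeq_one_succ]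
  exact abs_integral_mul_integral_sub_sq_le hinvQ hV1 hVm hπV hc hD hfm
    (measurable_opSeq P Q hfm 0 m) hf hdev

end Coupling

section SqrtNorm

variable {μ ν : Measure X} [IsProbabilityMeasure μ] [IsProbabilityMeasure ν] {V : X → ℝ}

lemma abs_integral_sub_integral_le_of_abs_le_mul_add (hVm : Measurable V) (hV0 : ∀ z, 0 ≤ V z)
    (hμV : Integrable V μ) (hνV : Integrable V ν) {a : ℝ}
    (hVnorm : ∀ g : X → ℝ, Measurable g → (∀ z, |g z| ≤ V z) →
      |∫ z, g z ∂μ - ∫ z, g z ∂ν| ≤ a)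
    {α β : ℝ} (hα : 0 ≤ α) (hβ : 0 ≤ β) {h : X → ℝ} (hhm : Measurable h)
    (hh : ∀ z, |h z| ≤ α * V z + β) :
    |∫ z, h z ∂μ - ∫ z, h z ∂ν| ≤ α * a + 2 * β := by
  -- where `α V + β` vanishes so does `h`, and `k = 0` there since `x / 0 = 0`
  set k : X → ℝ := fun z => h z / (α * V z + β)
  have hkm : Measurable k := hhm.div ((hVm.const_mul α).add_const β)
  have hk : ∀ z, |k z| ≤ 1 := fun z => by
    simp only [k, abs_div]
    exact div_le_one_of_le₀ ((hh z).trans (le_abs_self _)) (abs_nonneg _)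
  have hVk : ∀ z, |V z * k z| ≤ V z := fun z => by
    rw [abs_mul, abs_of_nonneg (hV0 z)]
    exact mul_le_of_le_one_right (hV0 z) (hk z)
  have hsplit : h = fun z => α * (V z * k z) + β * k z := by
    funext z
    rw [← mul_assoc, ← add_mul, mul_comm]
    exact (div_mul_cancel_of_imp fun hz => by simpa [hz] using hh z).symm
  have hintegral : ∀ η : Measure X, IsFiniteMeasure η → Integrable V η →
      ∫ z, h z ∂η = α * ∫ z, V z * k z ∂η + β * ∫ z, k z ∂η := fun η _ hηV => by
    have hVk_int : Integrable (fun z => V z * k z) η :=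
      hηV.mono' (hVm.mul hkm).aestronglyMeasurable (ae_of_all _ hVk)
    have hk_int : Integrable k η :=
      Integrable.of_bound hkm.aestronglyMeasurable 1 (ae_of_all _ fun z => (hk z :))
    rw [hsplit, integral_add (hVk_int.const_mul α) (hk_int.const_mul β), integral_const_mul,
      integral_const_mul]
  have hk_diff : |∫ z, k z ∂μ - ∫ z, k z ∂ν| ≤ 2 := by
    have hbound : ∀ η : Measure X, IsProbabilityMeasure η → |∫ z, k z ∂η| ≤ 1 := fun η _ => by
      simpa using norm_integral_le_of_norm_le_const (μ := η) (f := k) (ae_of_all _ hk)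
    linarith [abs_sub _ _ |>.trans (add_le_add (hbound μ ‹_›) (hbound ν ‹_›))]
  rw [hintegral μ inferInstance hμV, hintegral ν inferInstance hνV,
    show ∀ p q r s : ℝ, α * p + β * q - (α * r + β * s) = α * (p - r) + β * (q - s) by
      intros; ring]
  calc _ ≤ |α * (∫ z, V z * k z ∂μ - ∫ z, V z * k z ∂ν)| + |β * (∫ z, k z ∂μ - ∫ z, k z ∂ν)| :=
        abs_add_le _ _
    _ ≤ α * a + β * 2 := by
      rw [abs_mul, abs_mul, abs_of_nonneg hα, abs_of_nonneg hβ]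
      gcongr
      exact hVnorm _ (hVm.mul hkm) hVk
    _ = α * a + 2 * β := by ring

lemma abs_integral_sub_integral_le_of_abs_le_mul_sqrt (hVm : Measurable V) (hV0 : ∀ z, 0 ≤ V z)
    (hμV : Integrable V μ) (hνV : Integrable V ν) {C s : ℝ} (hs : 0 < s)
    (hVnorm : ∀ g : X → ℝ, Measurable g → (∀ z, |g z| ≤ V z) →
      |∫ z, g z ∂μ - ∫ z, g z ∂ν| ≤ C * s ^ 2)
    {c : ℝ} (hc : 0 ≤ c) {h : X → ℝ} (hhm : Measurable h) (hh : ∀ z, |h z| ≤ c * √(V z)) :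
    |∫ z, h z ∂μ - ∫ z, h z ∂ν| ≤ c * (C / 2 + 1) * s := by
  have hamgm : ∀ z, |h z| ≤ c / (2 * s) * V z + c * s / 2 := fun z => by
    have hsq := two_mul_le_add_sq (√(V z)) s
    rw [Real.sq_sqrt (hV0 z)] at hsq
    have : √(V z) ≤ V z / (2 * s) + s / 2 := by
      rw [div_add_div _ _ (by positivity) two_ne_zero, le_div_iff₀ (by positivity)]
      nlinarith
    calc |h z| ≤ c * √(V z) := hh z
      _ ≤ c * (V z / (2 * s) + s / 2) := by gcongr
      _ = c / (2 * s) * V z + c * s / 2 := by ring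
  calc _ ≤ c / (2 * s) * (C * s ^ 2) + 2 * (c * s / 2) :=
        abs_integral_sub_integral_le_of_abs_le_mul_add hVm hV0 hμV hνV hVnorm (by positivity)
          (by positivity) hhm hamgm
    _ = c * (C / 2 + 1) * s := by field_simp

end SqrtNorm

lemma summable_pow_div_two {r : ℝ} (hr0 : 0 ≤ r) (hr1 : r < 1) :
    Summable fun k : ℕ => r ^ (k / 2) := by
  have hgeom := summable_geometric_of_lt_one hr0 hr1
  refine Summable.even_add_odd ?_ ?_
  · simpa using hgeom
  · simpa [Nat.mul_add_div two_pos] using hgeom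

variable {π : Measure X} [IsProbabilityMeasure π] {P Q : Kernel X X} {V : X → ℝ} {C ρ : ℝ}

lemma abs_integral_mIterPQ_sub_le (hV1 : ∀ x, 1 ≤ V x) (hVm : Measurable V)
    (hπV : Integrable V π) (hprob : ∀ n x, IsProbabilityMeasure (mIterPQ P Q n x))
    (hVint : ∀ n x, Integrable V (mIterPQ P Q n x)) (hρ0 : 0 < ρ)
    (hgeo : ∀ g : X → ℝ, Measurable g → (∀ z, |g z| ≤ V z) → ∀ n x,
      |∫ z, g z ∂(mIterPQ P Q n x) - ∫ z, g z ∂π| ≤ C * ρ ^ n * V x)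
    ⦃h : X → ℝ⦄ ⦃c : ℝ⦄ (hc : 0 ≤ c) (hhm : Measurable h) (hh : ∀ z, |h z| ≤ c * √(V z))
    (n : ℕ) (x : X) :
    |∫ z, h z ∂(mIterPQ P Q n x) - ∫ z, h z ∂π| ≤ c * (C / 2 + 1) * √ρ ^ n * √(V x) := by
  have hV0 : ∀ z, 0 ≤ V z := fun z => zero_le_one.trans (hV1 z)
  have hs : 0 < √ρ ^ n * √(V x) := by
    have := Real.sqrt_pos.mpr (zero_lt_one.trans_le (hV1 x))
    positivity
  have hsq : C * ρ ^ n * V x = C * (√ρ ^ n * √(V x)) ^ 2 := by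
    rw [mul_pow, ← pow_mul, mul_comm n, pow_mul, Real.sq_sqrt hρ0.le, Real.sq_sqrt (hV0 x),
      mul_assoc]
  have := hprob n x
  simpa only [mul_assoc] using abs_integral_sub_integral_le_of_abs_le_mul_sqrt hVm hV0
    (hVint n x) hπV hs (fun g hg hgV => (hgeo g hg hgV n x).trans_eq hsq) hc hhm hh

lemma abs_opSeq_zero_sub_le (hinvP : π.bind (fun x => P x) = π) (hV1 : ∀ x, 1 ≤ V x)
    (hVm : Measurable V) (hπV : Integrable V π) (hprob : ∀ n x, IsProbabilityMeasure (mIterPQ P Q n x))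
    (hVint : ∀ n x, Integrable V (mIterPQ P Q n x)) (hC : 0 ≤ C) (hρ0 : 0 < ρ)
    (hgeo : ∀ g : X → ℝ, Measurable g → (∀ z, |g z| ≤ V z) → ∀ n x,
      |∫ z, g z ∂(mIterPQ P Q n x) - ∫ z, g z ∂π| ≤ C * ρ ^ n * V x)
    {f : X → ℝ} (hfm : Measurable f) {c₁ c₂ : ℝ} (hc₁ : 0 ≤ c₁) (hc₂ : 0 ≤ c₂)
    (hf : ∀ x, |f x| ≤ c₁ * √(V x)) (hPf : ∀ x, |∫ y, f y ∂P x| ≤ c₂ * √(V x)) (m : ℕ) (x : X) :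
    |opSeq P Q 0 m f x - ∫ y, f y ∂π| ≤ (c₁ + c₂) * (C / 2 + 1) * √ρ ^ (m / 2) * √(V x) := by
  have hPfm : Measurable fun x => ∫ y, f y ∂P x :=
    hfm.stronglyMeasurable.integral_kernel.measurable
  have hrate := abs_integral_mIterPQ_sub_le hV1 hVm hπV hprob hVint hρ0 hgeo
  obtain ⟨n, rfl | rfl⟩ := Nat.even_or_odd' m
  · rw [opSeq_zero_two_mul P Q hfm
      (fun n x => integrable_of_abs_le_mul_sqrt hV1 (hVint n x) hfm hf),
      show 2 * n / 2 = n by omega]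
    have hle : c₁ * (C / 2 + 1) ≤ (c₁ + c₂) * (C / 2 + 1) :=
      mul_le_mul_of_nonneg_right (by linarith) (by linarith)
    refine (hrate hc₁ hfm hf n x).trans ?_
    gcongr
  · rw [opSeq_zero_two_mul_add_one P Q hfm
      (fun n x => integrable_of_abs_le_mul_sqrt hV1 (hVint n x) hPfm hPf),
      ← integral_integral_eq_of_bind_eq hinvP (integrable_of_abs_le_mul_sqrt hV1 hπV hfm hf),
      show (2 * n + 1) / 2 = n by omega]
    have hle : c₂ * (C / 2 + 1) ≤ (c₁ + c₂) * (C / 2 + 1) :=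
      mul_le_mul_of_nonneg_right (by linarith) (by linarith)
    refine (hrate hc₂ hPfm hPf n x).trans ?_
    gcongr

lemma abs_covA_add_abs_covA_le [IsMarkovKernel Q]
    (hinvQ : π.bind (fun x => Q x) = π) (hV1 : ∀ x, 1 ≤ V x) (hVm : Measurable V)
    (hπV : Integrable V π) {f : X → ℝ} (hfm : Measurable f) {c K r : ℝ} (hc : 0 ≤ c)
    (hK : 0 ≤ K) (hr0 : 0 ≤ r) (hr1 : r ≤ 1) (hf : ∀ x, |f x| ≤ c * √(V x))
    (hdev : ∀ m x, |opSeq P Q 0 m f x - ∫ y, f y ∂π| ≤ K * r ^ (m / 2) * √(V x)) (k : ℕ) :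
    |covA π P Q f 0 (k + 1)| + |covA π P Q f 1 (k + 1)|
      ≤ 2 * c * K * (∫ x, V x ∂π) * r ^ (k / 2) := by
  have h₀ := abs_covA_zero_le P Q hV1 hVm hπV hc (by positivity) hfm hf (hdev (k + 1))
  have h₁ := abs_covA_one_succ_le P Q hinvQ hV1 hVm hπV hc (by positivity) hfm hf (hdev k)
  have hmono : r ^ ((k + 1) / 2) ≤ r ^ (k / 2) := pow_le_pow_of_le_one hr0 hr1 (by omega)
  have hπV0 : 0 ≤ ∫ x, V x ∂π := integral_nonneg fun x => zero_le_one.trans (hV1 x)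
  calc _ ≤ c * (K * r ^ ((k + 1) / 2)) * ∫ x, V x ∂π + c * (K * r ^ (k / 2)) * ∫ x, V x ∂π :=
        add_le_add h₀ h₁
    _ ≤ 2 * c * K * (∫ x, V x ∂π) * r ^ (k / 2) := by
        nlinarith [mul_le_mul_of_nonneg_left hmono (mul_nonneg (mul_nonneg hc hK) hπV0)]

end AlternatingChain

open AlternatingChain in
theorem stmt10_general {X : Type*} [MeasurableSpace X] (π : Measure X) [IsProbabilityMeasure π]
    (P Q : Kernel X X) [IsMarkovKernel P] [IsMarkovKernel Q]
    (hinvP : π.bind (fun x => P x) = π) (hinvQ : π.bind (fun x => Q x) = π)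
    (V : X → ℝ) (hV1 : ∀ x, 1 ≤ V x) (hVm : Measurable V) (hπV : Integrable V π)
    (hprob : ∀ (n : ℕ) (x : X), IsProbabilityMeasure (mIterPQ P Q n x))
    (hVint : ∀ (n : ℕ) (x : X), Integrable V (mIterPQ P Q n x))
    (C ρ : ℝ) (hC : 0 ≤ C) (hρ0 : 0 < ρ) (hρ1 : ρ < 1)
    (hgeo : ∀ g : X → ℝ, Measurable g → (∀ z, |g z| ≤ V z) →
      ∀ (n : ℕ) (x : X),
        |(∫ z, g z ∂(mIterPQ P Q n x)) - ∫ z, g z ∂π| ≤ C * ρ ^ n * V x)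
    (f : X → ℝ) (hfm : Measurable f)
    (c1 : ℝ) (hf : ∀ x, |f x| ≤ c1 * Real.sqrt (V x))
    (c2 : ℝ) (hPf : ∀ x, |∫ y, f y ∂(P x)| ≤ c2 * Real.sqrt (V x)) :
    Summable (fun k : ℕ => |covA π P Q f 0 (k + 1)| + |covA π P Q f 1 (k + 1)|) := by
  have := nonempty_of_isProbabilityMeasure π
  have hc1 := nonneg_of_abs_le_mul_sqrt hV1 hf
  have hc2 := nonneg_of_abs_le_mul_sqrt hV1 hPf
  have hK : 0 ≤ (c1 + c2) * (C / 2 + 1) := mul_nonneg (add_nonneg hc1 hc2) (by linarith)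
  have hr1 : √ρ < 1 := (Real.sqrt_lt' one_pos).mpr (by simpa using hρ1)
  have hdev := abs_opSeq_zero_sub_le hinvP hV1 hVm hπV hprob hVint hC hρ0 hgeo hfm hc1 hc2 hf hPf
  exact Summable.of_nonneg_of_le (fun k => by positivity)
    (abs_covA_add_abs_covA_le hinvQ hV1 hVm hπV hfm hc1 hK (Real.sqrt_nonneg ρ) hr1.le hf hdev)
    ((summable_pow_div_two (Real.sqrt_nonneg ρ) hr1).mul_left _)

/-- If the product kernel `PQ` is `V`-geometrically ergodic (the `V`-norm bound expressed
via measurable test functions `|g| ≤ V`, together with the drift condition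
`PQV ≤ λV + b`), then for every `f` with `|f|_{V^{1/2}} < ∞` and `|Pf|_{V^{1/2}} < ∞`,
the autocovariance series of the alternating chain is absolutely summable. -/
theorem stmt10 {X : Type*} [MeasurableSpace X] (π : Measure X) [IsProbabilityMeasure π]
    (P Q : Kernel X X) [IsMarkovKernel P] [IsMarkovKernel Q]
    (hinvP : π.bind (fun x => P x) = π) (hinvQ : π.bind (fun x => Q x) = π)
    (V : X → ℝ) (hV1 : ∀ x, 1 ≤ V x) (hVm : Measurable V) (hπV : Integrable V π)
    (hprob : ∀ (n : ℕ) (x : X), IsProbabilityMeasure (mIterPQ P Q n x))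
    (hVint : ∀ (n : ℕ) (x : X), Integrable V (mIterPQ P Q n x))
    (C ρ : ℝ) (hC : 0 ≤ C) (hρ0 : 0 < ρ) (hρ1 : ρ < 1)
    (hgeo : ∀ g : X → ℝ, Measurable g → (∀ z, |g z| ≤ V z) →
      ∀ (n : ℕ) (x : X),
        |(∫ z, g z ∂(mIterPQ P Q n x)) - ∫ z, g z ∂π| ≤ C * ρ ^ n * V x)
    (lam b : ℝ) (hlam0 : 0 < lam) (hlam1 : lam < 1) (hb : 0 ≤ b)
    (hdrift : ∀ x, (∫ y, (∫ z, V z ∂(Q y)) ∂(P x)) ≤ lam * V x + b)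
    (f : X → ℝ) (hfm : Measurable f)
    (c1 : ℝ) (hf : ∀ x, |f x| ≤ c1 * Real.sqrt (V x))
    (c2 : ℝ) (hPf : ∀ x, |∫ y, f y ∂(P x)| ≤ c2 * Real.sqrt (V x)) :
    Summable (fun k : ℕ => |covA π P Q f 0 (k + 1)| + |covA π P Q f 1 (k + 1)|) :=
  stmt10_general π P Q hinvP hinvQ V hV1 hVm hπV hprob hVint C ρ hC hρ0 hρ1 hgeo f hfm c1 hf c2 hPf
end

section
/- Metropolis–Hastings reversibility via Radon–Nikodym derivative: let K be a Markov kernel on (X, 𝒳) and π a probability measure. Define μ(dx×dx') = π(dx)K(x,dx') and ν(dx×dx') = π(dx')K(x',dx), and assume μ and ν are equivalent measures with 0 < (dν/dμ)(x,x') < ∞ μ-a.s. Then the kernel P(x, dx') = K(x,dx')α(x,x') + δ_x(dx')β(x), where α(x,x') = 1 ∧ (dν/dμ)(x,x') and β(x) = 1 − ∫K(x,dx')α(x,x'), is a π-reversible Markov kernel. -/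
open MeasureTheory ProbabilityTheory
open scoped ENNReal

/-!
With `ν = swap_* μ` and `r = dν/dμ`, one has `r ∘ swap = r⁻¹` `μ`-a.e., so the swap sends
`μ(dp) (1 ∧ r p)` to `ν(dp) (1 ∧ r⁻¹ p) = μ(dp) r p (1 ∧ r⁻¹ p) = μ(dp) (1 ∧ r p)`: the accepted
moves of the Metropolis–Hastings kernel are in detailed balance. The rejected moves stay on the
diagonal, where detailed balance is automatic.
-/

theorem ENNReal.mul_min_one_inv {a : ℝ≥0∞} (ha : a ≠ ⊤) : a * min 1 a⁻¹ = min 1 a := by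
  rcases eq_or_ne a 0 with rfl | ha₀
  · simp
  rcases le_total a 1 with h | h
  · rw [min_eq_left (ENNReal.one_le_inv.2 h), mul_one, min_eq_right h]
  · rw [min_eq_right (ENNReal.inv_le_one.2 h), ENNReal.mul_inv_cancel ha₀ ha, min_eq_left h]

theorem MeasurableEquiv.map_withDensity {α β : Type*} [MeasurableSpace α] [MeasurableSpace β]
    (e : α ≃ᵐ β) (μ : Measure α) {f : α → ℝ≥0∞} (hf : Measurable f) :
    (μ.withDensity f).map e = (μ.map e).withDensity (f ∘ e.symm) := by
  ext s hs
  rw [Measure.map_apply e.measurable hs, withDensity_apply _ (e.measurable hs),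
    withDensity_apply _ hs, setLIntegral_map hs (hf.comp e.symm.measurable) e.measurable]
  simp

theorem measurableEmbedding_swap {α β : Type*} [MeasurableSpace α] [MeasurableSpace β] :
    MeasurableEmbedding (Prod.swap : α × β → β × α) :=
  MeasurableEquiv.prodComm.measurableEmbedding

namespace MeasureTheory.Measure

variable {X : Type*} [MeasurableSpace X] {μ : Measure (X × X)} [SigmaFinite μ]

theorem rnDeriv_map_swap_comp_swap_ae_eq_inv (hac : μ ≪ μ.map Prod.swap) :
    (fun p ↦ (μ.map Prod.swap).rnDeriv μ p.swap) =ᵐ[μ] ((μ.map Prod.swap).rnDeriv μ)⁻¹ := by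
  have : SigmaFinite (μ.map Prod.swap) := measurableEmbedding_swap.sigmaFinite_map
  have hswap := measurableEmbedding_swap.rnDeriv_map μ (μ.map Prod.swap)
  rw [map_map measurable_swap measurable_swap, Prod.swap_swap_eq, map_id] at hswap
  exact Filter.EventuallyEq.trans (hac.ae_le hswap) (inv_rnDeriv' hac).symm

theorem map_swap_withDensity_min_one_rnDeriv (hac : μ ≪ μ.map Prod.swap)
    (hac' : μ.map Prod.swap ≪ μ) :
    (μ.withDensity fun p ↦ min 1 ((μ.map Prod.swap).rnDeriv μ p)).map Prod.swap
      = μ.withDensity fun p ↦ min 1 ((μ.map Prod.swap).rnDeriv μ p) := by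
  have : SigmaFinite (μ.map Prod.swap) := measurableEmbedding_swap.sigmaFinite_map
  set r := (μ.map Prod.swap).rnDeriv μ
  have hr : Measurable r := measurable_rnDeriv _ _
  have hf : Measurable fun p ↦ min 1 (r p) := measurable_const.min hr
  have hg : Measurable fun p : X × X ↦ min 1 (r p.swap) := hf.comp measurable_swap
  calc (μ.withDensity fun p ↦ min 1 (r p)).map Prod.swap
      = (μ.map Prod.swap).withDensity fun p ↦ min 1 (r p.swap) :=
        MeasurableEquiv.prodComm.map_withDensity μ hf
    _ = (μ.withDensity r).withDensity fun p ↦ min 1 (r p.swap) := by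
        rw [withDensity_rnDeriv_eq _ _ hac']
    _ = μ.withDensity (r * fun p ↦ min 1 (r p.swap)) := by
        rw [withDensity_mul μ hr hg]
    _ = μ.withDensity fun p ↦ min 1 (r p) := by
        refine withDensity_congr_ae ?_
        filter_upwards [rnDeriv_map_swap_comp_swap_ae_eq_inv hac,
          rnDeriv_lt_top (μ.map Prod.swap) μ] with p hswap hfin
        rw [Pi.mul_apply, show r p.swap = (r p)⁻¹ from hswap]
        exact ENNReal.mul_min_one_inv hfin.ne

end MeasureTheory.Measure

section MetropolisHastings

variable {X : Type*} [MeasurableSpace X]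

theorem withDensity_add_smul_dirac_univ (κ : Measure X) [IsProbabilityMeasure κ]
    {a : X → ℝ≥0∞} (ha : ∀ y, a y ≤ 1) (x : X) :
    (κ.withDensity a + (1 - ∫⁻ y, a y ∂κ) • Measure.dirac x) Set.univ = 1 := by
  have h_le : ∫⁻ y, a y ∂κ ≤ 1 := (lintegral_mono ha).trans_eq (by simp)
  simp [h_le]

theorem setLIntegral_withDensity_add_smul_dirac (π : Measure X) [SFinite π]
    (K : Kernel X X) [IsSFiniteKernel K] {a : X × X → ℝ≥0∞} (ha : Measurable a)
    (β : X → ℝ≥0∞) {A B : Set X} (hA : MeasurableSet A) (hB : MeasurableSet B) :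
    ∫⁻ x in A, ((K x).withDensity (fun x' ↦ a (x, x')) + β x • Measure.dirac x) B ∂π
      = (π.compProd K).withDensity a (A ×ˢ B) + ∫⁻ x in B ∩ A, β x ∂π := by
  simp only [Measure.add_apply, Measure.smul_apply, smul_eq_mul, withDensity_apply _ hB,
    Measure.dirac_apply' _ hB]
  have h_meas : Measurable fun x ↦ ∫⁻ x' in B, a (x, x') ∂K x :=
    Measurable.setLIntegral_kernel_prod_right (f := fun x x' ↦ a (x, x')) ha hB
  rw [lintegral_add_left h_meas,
    withDensity_apply _ (hA.prod hB), Measure.setLIntegral_compProd ha hA hB]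
  simp only [← Set.indicator_mul_right, Pi.one_apply, mul_one]
  rw [setLIntegral_indicator hB]

end MetropolisHastings

theorem stmt11_general {X : Type*} [MeasurableSpace X]
    (π : Measure X) [IsProbabilityMeasure π]
    (K : Kernel X X) [IsMarkovKernel K]
    (μ ν : Measure (X × X))
    (hμ : μ = π.compProd K)
    (hν : ν = (π.compProd K).map Prod.swap)
    (hac : μ ≪ ν) (hac' : ν ≪ μ)
    (α : X → X → ℝ≥0∞)
    (hα : ∀ x x', α x x' = min 1 (ν.rnDeriv μ (x, x')))
    (P : X → Measure X)
    (hP : ∀ x, P x = (K x).withDensity (fun x' => α x x')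
      + ((1 : ℝ≥0∞) - ∫⁻ x', α x x' ∂(K x)) • Measure.dirac x) :
    (∀ x, P x Set.univ = 1) ∧
      ∀ A B : Set X, MeasurableSet A → MeasurableSet B →
        ∫⁻ x in A, P x B ∂π = ∫⁻ x in B, P x A ∂π := by
  subst hμ hν
  obtain rfl : α = fun x x' ↦ min 1 (((π.compProd K).map Prod.swap).rnDeriv _ (x, x')) :=
    funext₂ hα
  refine ⟨fun x ↦ ?_, fun A B hA hB ↦ ?_⟩
  · rw [hP]
    exact withDensity_add_smul_dirac_univ _ (fun _ ↦ min_le_left _ _) x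
  have hf : Measurable fun p ↦ min 1 (((π.compProd K).map Prod.swap).rnDeriv (π.compProd K) p) :=
    measurable_const.min (Measure.measurable_rnDeriv _ _)
  simp only [hP]
  rw [setLIntegral_withDensity_add_smul_dirac π K hf _ hA hB,
    setLIntegral_withDensity_add_smul_dirac π K hf _ hB hA,
    ← Set.preimage_swap_prod B A, ← Measure.map_apply measurable_swap (hB.prod hA),
    Measure.map_swap_withDensity_min_one_rnDeriv hac hac', Set.inter_comm]

/-- Metropolis–Hastings reversibility (Proposition 8): with `μ(dx dx') = π(dx)K(x,dx')`,
`ν(dx dx') = π(dx')K(x',dx)` equivalent and `0 < dν/dμ < ∞` `μ`-a.e., the kernel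
`P(x, dx') = K(x, dx') α(x,x') + δ_x(dx') β(x)` with `α = 1 ∧ dν/dμ` is a Markov kernel
satisfying detailed balance with respect to `π`. -/
theorem stmt11 {X : Type*} [MeasurableSpace X]
    (π : Measure X) [IsProbabilityMeasure π]
    (K : Kernel X X) [IsMarkovKernel K]
    (μ ν : Measure (X × X))
    (hμ : μ = π.compProd K)
    (hν : ν = (π.compProd K).map Prod.swap)
    (hac : μ ≪ ν) (hac' : ν ≪ μ)
    (hpos : ∀ᵐ p ∂μ, 0 < ν.rnDeriv μ p ∧ ν.rnDeriv μ p < ⊤)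
    (α : X → X → ℝ≥0∞)
    (hα : ∀ x x', α x x' = min 1 (ν.rnDeriv μ (x, x')))
    (P : X → Measure X)
    (hP : ∀ x, P x = (K x).withDensity (fun x' => α x x')
      + ((1 : ℝ≥0∞) - ∫⁻ x', α x x' ∂(K x)) • Measure.dirac x) :
    (∀ x, P x Set.univ = 1) ∧
      ∀ A B : Set X, MeasurableSet A → MeasurableSet B →
        ∫⁻ x in A, P x B ∂π = ∫⁻ x in B, P x A ∂π :=
  stmt11_general π K μ ν hμ hν hac hac' α hα P hP
end

section
/- For the reversed-measure construction of the Metropolis–Hastings acceptance ratio: with μ, ν as above (μ(dx×dx') = π(dx)K(x,dx'), ν(dx×dx') = π(dx')K(x',dx)) and s : X×X → ℝ the swap map s(x,x') = (x',x), it holds that ν = s_*μ (the pushforward of μ under the swap), and consequently (dν/dμ)(x,x') · (dν/dμ)(x',x) = 1 for μ-a.e. (x,x') when μ and ν are equivalent. -/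
/-!
The swap pushes `π(dx)K(x,dx')` to a measure with the same values `∫⁻ x' in B, K x' A ∂π` on
rectangles `A ×ˢ B` as `ν`, and finite measures on a product agree once they agree on rectangles.
For the density identity, transporting along the involution `s` gives
`(dν/dμ) ∘ s = d(s_*ν)/d(s_*μ) = dμ/dν`, and `(dμ/dν) ⬝ (dν/dμ) = 1` by the chain rule.
-/

open MeasureTheory ProbabilityTheory

namespace MeasureTheory.Measure

variable {α : Type*} [MeasurableSpace α]

lemma map_swap_compProd_apply_prod (π : Measure α) [SFinite π] (K : Kernel α α)
    [IsSFiniteKernel K] {A B : Set α} (hA : MeasurableSet A) (hB : MeasurableSet B) :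
    (π ⊗ₘ K).map Prod.swap (A ×ˢ B) = ∫⁻ x' in B, K x' A ∂π := by
  rw [map_apply measurable_swap (hA.prod hB), Set.preimage_swap_prod, compProd_apply_prod hB hA]

lemma eq_map_swap_compProd_of_apply_prod (π : Measure α) [IsFiniteMeasure π] (K : Kernel α α)
    [IsFiniteKernel K] {ν : Measure (α × α)}
    (hν : ∀ A B : Set α, MeasurableSet A → MeasurableSet B →
      ν (A ×ˢ B) = ∫⁻ x' in B, K x' A ∂π) :
    ν = (π ⊗ₘ K).map Prod.swap :=
  (ext_prod fun hA hB ↦ by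
    rw [map_swap_compProd_apply_prod π K hA hB, hν _ _ hA hB]).symm

lemma absolutelyContinuous_map_of_involutive {f : α → α} (hf : Function.Involutive f)
    (hf_meas : Measurable f) {μ : Measure α} (h : μ.map f ≪ μ) : μ ≪ μ.map f := by
  simpa [map_map hf_meas hf_meas, hf.comp_self] using h.map hf_meas

lemma rnDeriv_map_mul_rnDeriv_map_comp_of_involutive {f : α → α}
    (hf : Function.Involutive f) (hf_meas : Measurable f) (μ : Measure α) [SigmaFinite μ]
    (h : μ.map f ≪ μ) :
    ∀ᵐ x ∂μ, (μ.map f).rnDeriv μ x * (μ.map f).rnDeriv μ (f x) = 1 := by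
  have hf_emb : MeasurableEmbedding f :=
    (MeasurableEquiv.ofInvolutive f hf hf_meas).measurableEmbedding
  have : SigmaFinite (μ.map f) := hf_emb.sigmaFinite_map
  have h_map_map : (μ.map f).map f = μ := by simp [map_map hf_meas hf_meas, hf.comp_self]
  have h' : μ ≪ μ.map f := absolutelyContinuous_map_of_involutive hf hf_meas h
  have h_comp : (fun x ↦ (μ.map f).rnDeriv μ (f x)) =ᵐ[μ] μ.rnDeriv (μ.map f) := by
    have := hf_emb.rnDeriv_map μ (μ.map f)
    rw [h_map_map] at this
    exact h' this
  filter_upwards [h_comp, rnDeriv_mul_rnDeriv (κ := μ) h', rnDeriv_self μ]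
    with x hx h_chain h_self
  rw [hx, mul_comm]
  exact h_chain.trans h_self

end MeasureTheory.Measure

theorem stmt12_general {X : Type*} [MeasurableSpace X]
    (π : Measure X) [IsProbabilityMeasure π]
    (K : Kernel X X) [IsMarkovKernel K]
    (μ ν : Measure (X × X))
    (hμ : μ = π.compProd K)
    (hν : ∀ A B : Set X, MeasurableSet A → MeasurableSet B →
      ν (A ×ˢ B) = ∫⁻ x' in B, K x' A ∂π)
    (hac' : ν ≪ μ) :
    ν = μ.map Prod.swap ∧
      ∀ᵐ p ∂μ, ν.rnDeriv μ p * ν.rnDeriv μ p.swap = 1 := by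
  subst hμ
  obtain rfl := Measure.eq_map_swap_compProd_of_apply_prod π K hν
  exact ⟨rfl, Measure.rnDeriv_map_mul_rnDeriv_map_comp_of_involutive Prod.swap_swap
    measurable_swap _ hac'⟩

/-- The reversed measure `ν(dx dx') = π(dx')K(x',dx)` is the pushforward of
`μ(dx dx') = π(dx)K(x,dx')` under the coordinate swap; consequently, when `μ` and `ν`
are equivalent, `(dν/dμ)(x,x') ⬝ (dν/dμ)(x',x) = 1` for `μ`-a.e. `(x,x')`. -/
theorem stmt12 {X : Type*} [MeasurableSpace X]
    (π : Measure X) [IsProbabilityMeasure π]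
    (K : Kernel X X) [IsMarkovKernel K]
    (μ ν : Measure (X × X)) [IsFiniteMeasure ν]
    (hμ : μ = π.compProd K)
    (hν : ∀ A B : Set X, MeasurableSet A → MeasurableSet B →
      ν (A ×ˢ B) = ∫⁻ x' in B, K x' A ∂π)
    (hac : μ ≪ ν) (hac' : ν ≪ μ) :
    ν = μ.map Prod.swap ∧
      ∀ᵐ p ∂μ, ν.rnDeriv μ p * ν.rnDeriv μ p.swap = 1 :=
  stmt12_general π K μ ν hμ hν hac'
end

section
/- Reversibility of the marginal chain of the systematic refreshment algorithm: let π(dy×du) = π*(dy)R(y,du) and suppose the kernel on Y×U mapping (y,u) to (ŷ,û) drawn from S(y,u;dŷ)T(y,u,ŷ;dû) and accepted with probability α(y,u,ŷ,û) is π-reversible. Then the kernel K on Y defined by K(y, dy') = β(y)δ_y(dy') + ∫∫ R(y,du)S(y,u;dy')T(y,u,y';du')α(y,u,y',u'), with β the complementary rejection probability, is π*-reversible. -/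
open MeasureTheory ProbabilityTheory
open scoped ENNReal

/-!
Testing the detailed-balance identity of the auxiliary chain on `f = 1_A ∘ fst`, `g = 1_B ∘ fst`
and integrating `u` out against `R(y, ·)` gives `∫_A accept(y, B) dπ* = ∫_B accept(y, A) dπ*`,
i.e. the accepted part of the marginal kernel is `π*`-symmetric. The rejection part
`β(y) δ_y` contributes `∫_{A ∩ B} β dπ*` to both sides.
-/

/-- Detailed balance of a transition given as the set function `k y B = K(y, B)`. -/
def DetailedBalance {Y : Type*} [MeasurableSpace Y] (μ : Measure Y) (k : Y → Set Y → ℝ≥0∞) :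
    Prop :=
  ∀ A B : Set Y, MeasurableSet A → MeasurableSet B →
    ∫⁻ y in A, k y B ∂μ = ∫⁻ y in B, k y A ∂μ

theorem DetailedBalance.add_rejection {Y : Type*} [MeasurableSpace Y] {μ : Measure Y}
    {k : Y → Set Y → ℝ≥0∞} (hk : DetailedBalance μ k)
    (hk_meas : ∀ B, MeasurableSet B → Measurable (k · B)) (r : Y → ℝ≥0∞) :
    DetailedBalance μ (fun y B => k y B + B.indicator (fun _ => r y) y) := by
  intro A B hA hB
  have hdiag : ∀ {C D : Set Y}, MeasurableSet D →
      ∫⁻ y in C, D.indicator (fun _ => r y) y ∂μ = ∫⁻ y in D ∩ C, r y ∂μ := fun hD => by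
    rw [← Measure.restrict_restrict hD, ← lintegral_indicator hD]
    rfl
  rw [lintegral_add_left (hk_meas B hB), lintegral_add_left (hk_meas A hA), hk A B hA hB,
    hdiag hB, hdiag hA, Set.inter_comm]

theorem lintegral_compProd_indicator_fst_mul {α β : Type*} [MeasurableSpace α]
    [MeasurableSpace β] (μ : Measure α) [SFinite μ] (κ : Kernel α β) [IsSFiniteKernel κ]
    {s : Set α} (hs : MeasurableSet s) {f : α × β → ℝ≥0∞} (hf : Measurable f) :
    ∫⁻ p, s.indicator 1 p.1 * f p ∂(μ ⊗ₘ κ) = ∫⁻ a in s, ∫⁻ b, f (a, b) ∂(κ a) ∂μ := by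
  have hind : (fun p => s.indicator 1 p.1 * f p) = (s ×ˢ Set.univ).indicator f := by
    ext p
    by_cases hp : p.1 ∈ s <;> simp [hp]
  rw [hind, lintegral_indicator (hs.prod MeasurableSet.univ),
    Measure.setLIntegral_compProd hf hs MeasurableSet.univ]
  simp only [Measure.restrict_univ]

section Refreshment

variable {Y U : Type*} [MeasurableSpace Y] [MeasurableSpace U]

/-- Probability that the auxiliary chain started at `(y, u)` proposes a move into `B × U`
and accepts it. -/
noncomputable def jointAccept (S : Y → U → Measure Y) (T : Y → U → Y → Measure U)
    (α : Y → U → Y → U → ℝ≥0∞) (y : Y) (u : U) (B : Set Y) : ℝ≥0∞ :=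
  ∫⁻ y', B.indicator (fun y' => ∫⁻ u', α y u y' u' ∂(T y u y')) y' ∂(S y u)

theorem lintegral_indicator_mul_eq_jointAccept (S : Y → U → Measure Y)
    (T : Y → U → Y → Measure U) (α : Y → U → Y → U → ℝ≥0∞) (y : Y) (u : U) (B : Set Y) :
    ∫⁻ y', ∫⁻ u', B.indicator 1 y' * α y u y' u' ∂(T y u y') ∂(S y u)
      = jointAccept S T α y u B := by
  refine lintegral_congr fun y' => ?_
  by_cases hy' : y' ∈ B <;> simp [hy']

theorem detailedBalance_lintegral_jointAccept (μ : Measure Y) [SFinite μ]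
    (R : Kernel Y U) [IsSFiniteKernel R]
    {S : Y → U → Measure Y} {T : Y → U → Y → Measure U} {α : Y → U → Y → U → ℝ≥0∞}
    (hmeas : ∀ B, MeasurableSet B → Measurable (fun p : Y × U => jointAccept S T α p.1 p.2 B))
    (hrev : ∀ f g : Y × U → ℝ≥0∞, Measurable f → Measurable g →
      (∫⁻ p, f p * ∫⁻ y', (∫⁻ u', g (y', u') * α p.1 p.2 y' u' ∂(T p.1 p.2 y'))
          ∂(S p.1 p.2) ∂(μ.compProd R))
        = ∫⁻ p, g p * ∫⁻ y', (∫⁻ u', f (y', u') * α p.1 p.2 y' u' ∂(T p.1 p.2 y'))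
          ∂(S p.1 p.2) ∂(μ.compProd R)) :
    DetailedBalance μ (fun y B => ∫⁻ u, jointAccept S T α y u B ∂(R y)) := by
  intro A B hA hB
  have h_ind_fst : ∀ {C : Set Y}, MeasurableSet C →
      Measurable (fun p : Y × U => C.indicator (1 : Y → ℝ≥0∞) p.1) := fun hC =>
    (measurable_one.indicator hC).comp measurable_fst
  have h := hrev _ _ (h_ind_fst hA) (h_ind_fst hB)
  simp only [lintegral_indicator_mul_eq_jointAccept] at h
  rwa [lintegral_compProd_indicator_fst_mul μ R hA (hmeas B hB),
    lintegral_compProd_indicator_fst_mul μ R hB (hmeas A hA)] at h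

end Refreshment

theorem stmt18_general {Y U : Type*} [MeasurableSpace Y] [MeasurableSpace U]
    (πstar : Measure Y) [IsProbabilityMeasure πstar]
    (R : Kernel Y U) [IsMarkovKernel R]
    (S : Y → U → Measure Y) (T : Y → U → Y → Measure U)
    (α : Y → U → Y → U → ℝ≥0∞)
    (hmeas : ∀ B : Set Y, MeasurableSet B →
      Measurable (fun p : Y × U =>
        ∫⁻ y', B.indicator (fun y' => ∫⁻ u', α p.1 p.2 y' u' ∂(T p.1 p.2 y')) y'
          ∂(S p.1 p.2)))
    (hrev : ∀ f g : Y × U → ℝ≥0∞, Measurable f → Measurable g →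
      (∫⁻ p, f p * ∫⁻ y', (∫⁻ u', g (y', u') * α p.1 p.2 y' u' ∂(T p.1 p.2 y'))
          ∂(S p.1 p.2) ∂(πstar.compProd R))
        = ∫⁻ p, g p * ∫⁻ y', (∫⁻ u', f (y', u') * α p.1 p.2 y' u' ∂(T p.1 p.2 y'))
          ∂(S p.1 p.2) ∂(πstar.compProd R))
    (accept : Y → Set Y → ℝ≥0∞)
    (haccept : ∀ y B, accept y B =
      ∫⁻ u, ∫⁻ y', B.indicator (fun y' => ∫⁻ u', α y u y' u' ∂(T y u y')) y'
        ∂(S y u) ∂(R y)) :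
    ∀ A B : Set Y, MeasurableSet A → MeasurableSet B →
      ∫⁻ y in A, (accept y B + B.indicator (fun _ => 1 - accept y Set.univ) y) ∂πstar
        = ∫⁻ y in B, (accept y A + A.indicator (fun _ => 1 - accept y Set.univ) y) ∂πstar := by
  have haccept' : accept = fun y B => ∫⁻ u, jointAccept S T α y u B ∂(R y) :=
    funext₂ haccept
  have h_meas : ∀ B, MeasurableSet B → Measurable (accept · B) := fun B hB => by
    rw [haccept']
    exact (hmeas B hB).lintegral_kernel_prod_right
  have h_accept : DetailedBalance πstar accept :=
    haccept' ▸ detailedBalance_lintegral_jointAccept πstar R hmeas hrev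
  exact h_accept.add_rejection h_meas (fun y => 1 - accept y Set.univ)

/-- Reversibility of the marginal chain of the systematic refreshment algorithm
(Proposition 13): if the auxiliary-variable acceptance dynamics, with target
`π(dy du) = π*(dy)R(y,du)`, proposal kernels `S`, `T` and acceptance probability `α`,
satisfies detailed balance with respect to `π`, then the marginal kernel
`K(y, dy') = β(y)δ_y(dy') + ∫∫ R(y,du)S(y,u;dy')T(y,u,y';du')α(y,u,y',u')`
satisfies detailed balance with respect to `π*`. -/
theorem stmt18 {Y U : Type*} [MeasurableSpace Y] [MeasurableSpace U]
    (πstar : Measure Y) [IsProbabilityMeasure πstar]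
    (R : Kernel Y U) [IsMarkovKernel R]
    (S : Y → U → Measure Y) (T : Y → U → Y → Measure U)
    (hS : ∀ y u, IsProbabilityMeasure (S y u))
    (hT : ∀ y u y', IsProbabilityMeasure (T y u y'))
    (α : Y → U → Y → U → ℝ≥0∞) (hα1 : ∀ y u y' u', α y u y' u' ≤ 1)
    (hmeas : ∀ B : Set Y, MeasurableSet B →
      Measurable (fun p : Y × U =>
        ∫⁻ y', B.indicator (fun y' => ∫⁻ u', α p.1 p.2 y' u' ∂(T p.1 p.2 y')) y'
          ∂(S p.1 p.2)))
    (hrev : ∀ f g : Y × U → ℝ≥0∞, Measurable f → Measurable g →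
      (∫⁻ p, f p * ∫⁻ y', (∫⁻ u', g (y', u') * α p.1 p.2 y' u' ∂(T p.1 p.2 y'))
          ∂(S p.1 p.2) ∂(πstar.compProd R))
        = ∫⁻ p, g p * ∫⁻ y', (∫⁻ u', f (y', u') * α p.1 p.2 y' u' ∂(T p.1 p.2 y'))
          ∂(S p.1 p.2) ∂(πstar.compProd R))
    (accept : Y → Set Y → ℝ≥0∞)
    (haccept : ∀ y B, accept y B =
      ∫⁻ u, ∫⁻ y', B.indicator (fun y' => ∫⁻ u', α y u y' u' ∂(T y u y')) y'
        ∂(S y u) ∂(R y)) :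
    ∀ A B : Set Y, MeasurableSet A → MeasurableSet B →
      ∫⁻ y in A, (accept y B + B.indicator (fun _ => 1 - accept y Set.univ) y) ∂πstar
        = ∫⁻ y in B, (accept y A + A.indicator (fun _ => 1 - accept y Set.univ) y) ∂πstar :=
  stmt18_general πstar R S T α hmeas hrev accept haccept
end
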